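/- arXiv:2310.01000 — 3 statements merged into one kernel-verified Lean document; each statement's English description precedes it below -/
import Mathlib

section
/- For every finite safe Petri net N₀ there exists an unfolding unf(N₀): a branching process of N₀ that is maximal with respect to the subprocess relation ≤, i.e. every branching process B of N₀ satisfies B ≤ unf(N₀); moreover any two such maximal branching processes of N₀ are isomorphic. -/
namespace PG

/-- A (pre-)Petri net: places `P`, transitions `T`, flow maps and an initial marking.
Markings are sets of places (the nets considered are safe). -/
structure PreNet (P T : Type) : Type where
  pre : T → Set P
  post : T → Set P
  init : Set P

namespace PreNet

variable {P T : Type}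

/-- A transition is enabled at a marking if its preset is contained in it. -/
def enabled (N : PreNet P T) (M : Set P) (t : T) : Prop := N.pre t ⊆ M

/-- Firing a transition. -/
def fire (N : PreNet P T) (M : Set P) (t : T) : Set P := (M \ N.pre t) ∪ N.post t

/-- `Fires N M l M'` : firing the sequence `l` of (successively enabled) transitions
from `M` yields `M'`. -/
inductive Fires (N : PreNet P T) : Set P → List T → Set P → Prop
  | nil (M : Set P) : Fires N M [] M
  | cons {M M' : Set P} {t : T} {l : List T} :
      N.enabled M t → Fires N (N.fire M t) l M' → Fires N M (t :: l) M'

/-- Reachable markings. -/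
def reachable (N : PreNet P T) (M : Set P) : Prop := ∃ l : List T, N.Fires N.init l M

/-- Safety: firing never puts a token on an already occupied place, so markings
may be taken as sets of places. -/
def Safe (N : PreNet P T) : Prop :=
  ∀ M, N.reachable M → ∀ t, N.enabled M t → (M \ N.pre t) ∩ N.post t = ∅

/-- The flow relation on nodes. -/
def flow (N : PreNet P T) : P ⊕ T → P ⊕ T → Prop
  | Sum.inl p, Sum.inr t => p ∈ N.pre t
  | Sum.inr t, Sum.inl p => p ∈ N.post t
  | _, _ => False

/-- Causal order: `x ≤ y` iff `x F⁺ y` or `x = y`. -/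
def le (N : PreNet P T) : P ⊕ T → P ⊕ T → Prop := Relation.ReflTransGen N.flow

/-- Strict causal order `x F⁺ y`. -/
def lt (N : PreNet P T) : P ⊕ T → P ⊕ T → Prop := Relation.TransGen N.flow

/-- Conflict of two nodes. -/
def conflict (N : PreNet P T) (x y : P ⊕ T) : Prop :=
  ∃ t₁ t₂ : T, t₁ ≠ t₂ ∧ (N.pre t₁ ∩ N.pre t₂).Nonempty ∧
    N.le (Sum.inr t₁) x ∧ N.le (Sum.inr t₂) y

/-- Concurrency of two nodes: neither causally related nor in conflict. -/
def concurrent (N : PreNet P T) (x y : P ⊕ T) : Prop :=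
  ¬ N.le x y ∧ ¬ N.le y x ∧ ¬ N.conflict x y

end PreNet

/-- Well-formedness of a Petri net: presets nonempty and finite, postsets finite. -/
structure IsPetriNet {P T : Type} (N : PreNet P T) : Prop where
  pre_nonempty : ∀ t, (N.pre t).Nonempty
  pre_finite : ∀ t, (N.pre t).Finite
  post_finite : ∀ t, (N.post t).Finite

/-- Occurrence net. -/
structure IsOccurrenceNet {P T : Type} (N : PreNet P T) : Prop where
  toIsPetriNet : IsPetriNet N
  acyclic : ∀ x, ¬ N.lt x x
  finitely_preceded : ∀ x, {y | N.le y x}.Finite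
  place_pre_subsingleton : ∀ p : P, {t : T | p ∈ N.post t}.Subsingleton
  no_self_conflict : ∀ t : T, ¬ N.conflict (Sum.inr t) (Sum.inr t)
  init_eq : N.init = {p | ∀ t, p ∉ N.post t}

/-- Net homomorphism: preserves presets, postsets and the initial marking bijectively. -/
structure IsNetHom {P₁ T₁ P₂ T₂ : Type} (N₁ : PreNet P₁ T₁) (N₂ : PreNet P₂ T₂)
    (fp : P₁ → P₂) (ft : T₁ → T₂) : Prop where
  pre_bij : ∀ t, Set.BijOn fp (N₁.pre t) (N₂.pre (ft t))
  post_bij : ∀ t, Set.BijOn fp (N₁.post t) (N₂.post (ft t))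
  init_bij : Set.BijOn fp N₁.init N₂.init

/-- `(N, (fp, ft))` is a branching process of `N₀`. -/
structure IsBranchingProcess {P₀ T₀ P T : Type} (N₀ : PreNet P₀ T₀)
    (N : PreNet P T) (fp : P → P₀) (ft : T → T₀) : Prop where
  occ : IsOccurrenceNet N
  hom : IsNetHom N N₀ fp ft
  unique : ∀ t₁ t₂ : T, N.pre t₁ = N.pre t₂ → ft t₁ = ft t₂ → t₁ = t₂

/-- The subprocess relation `B₁ ≤ B₂` between branching processes of the same net:
existence of an injective homomorphism commuting with the projections. -/
def BPle {P₀ T₀ P₁ T₁ P₂ T₂ : Type} (N₁ : PreNet P₁ T₁) (fp₁ : P₁ → P₀) (ft₁ : T₁ → T₀)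
    (N₂ : PreNet P₂ T₂) (fp₂ : P₂ → P₀) (ft₂ : T₂ → T₀) : Prop :=
  ∃ (gp : P₁ → P₂) (gt : T₁ → T₂),
    IsNetHom N₁ N₂ gp gt ∧ fp₂ ∘ gp = fp₁ ∧ ft₂ ∘ gt = ft₁ ∧
    Function.Injective gp ∧ Function.Injective gt

/-- Isomorphism `B₁ ≅ B₂` of branching processes: a bijective homomorphism
commuting with the projections. -/
def BPEquiv {P₀ T₀ P₁ T₁ P₂ T₂ : Type} (N₁ : PreNet P₁ T₁) (fp₁ : P₁ → P₀) (ft₁ : T₁ → T₀)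
    (N₂ : PreNet P₂ T₂) (fp₂ : P₂ → P₀) (ft₂ : T₂ → T₀) : Prop :=
  ∃ (gp : P₁ → P₂) (gt : T₁ → T₂),
    IsNetHom N₁ N₂ gp gt ∧ fp₂ ∘ gp = fp₁ ∧ ft₂ ∘ gt = ft₁ ∧
    Function.Bijective gp ∧ Function.Bijective gt

section Future

variable {P T : Type}

/-- Nodes of the future of a cut `C`: every place of `C` is a causal predecessor
of, or concurrent to, the node. -/
def futNode (N : PreNet P T) (C : Set P) (x : P ⊕ T) : Prop :=
  ∀ p ∈ C, N.le (Sum.inl p) x ∨ N.concurrent (Sum.inl p) x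

abbrev FutP (N : PreNet P T) (C : Set P) : Type := {p : P // futNode N C (Sum.inl p)}
abbrev FutT (N : PreNet P T) (C : Set P) : Type := {t : T // futNode N C (Sum.inr t)}

/-- The future `Fut(B, C)` of a cut `C`: nodes as above, flow maps restricted,
initial marking `C`. -/
def futNet (N : PreNet P T) (C : Set P) : PreNet (FutP N C) (FutT N C) where
  pre t := {p | p.1 ∈ N.pre t.1}
  post t := {p | p.1 ∈ N.post t.1}
  init := {p | p.1 ∈ C}

end Future

section Lkc

variable {P T P₀ T₀ : Type}

/-- The last known cut `lkc(t)` of a transition. -/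
def lkc (N : PreNet P T) (t : T) : Set P :=
  {p | ¬ N.lt (Sum.inl p) (Sum.inr t) ∧
    ∀ t' : T, p ∈ N.post t' → N.le (Sum.inr t') (Sum.inr t)}

/-- The last known marking `lkm(t) = π(lkc(t))`. -/
def lkm (N : PreNet P T) (fp : P → P₀) (t : T) : Set P₀ := fp '' lkc N t

/-- Partial repetition cuts `prc(t₁, t₂)`. -/
def prc (N : PreNet P T) (fp : P → P₀) (t₁ t₂ : T) : Prop :=
  lkm N fp t₁ = lkm N fp t₂ ∧ lkc N t₁ \ N.post t₁ = lkc N t₂ \ N.post t₂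

/-- A loop of partial repetition cuts: `prc(t₁, t₂)` with `t₁ < t₂`. -/
def prcLoop (N : PreNet P T) (fp : P → P₀) (t₁ t₂ : T) : Prop :=
  prc N fp t₁ t₂ ∧ N.lt (Sum.inr t₁) (Sum.inr t₂)

end Lkc

section Glue

variable {P T P₀ T₀ : Type}

/-- Places of the cut-and-glued process `B - Fut(B,C₂) + Fut(B,C₁)'`:
left places are those of `B` outside `Fut(B,C₂)` (keeping `C₂`), right places
are the fresh copies of the places of `Fut(B,C₁)` other than its initial marking. -/
def gluedPProp (N : PreNet P T) (C₁ C₂ : Set P) : P ⊕ P → Prop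
  | Sum.inl p => ¬ futNode N C₂ (Sum.inl p) ∨ p ∈ C₂
  | Sum.inr p => futNode N C₁ (Sum.inl p) ∧ p ∉ C₁

/-- Transitions of the cut-and-glued process. -/
def gluedTProp (N : PreNet P T) (C₁ C₂ : Set P) : T ⊕ T → Prop
  | Sum.inl t => ¬ futNode N C₂ (Sum.inr t)
  | Sum.inr t => futNode N C₁ (Sum.inr t)

abbrev GluedP (N : PreNet P T) (C₁ C₂ : Set P) : Type := {x : P ⊕ P // gluedPProp N C₁ C₂ x}
abbrev GluedT (N : PreNet P T) (C₁ C₂ : Set P) : Type := {x : T ⊕ T // gluedTProp N C₁ C₂ x}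

/-- The cut-and-glued object `B_{C₁ → C₂} = B - Fut(B, C₂) + Fut(B, C₁)'`,
where the copy of `Fut(B, C₁)` is glued along `C₂` via the identification
`e : C₂ → C₁`. -/
def gluedNet (N : PreNet P T) (C₁ C₂ : Set P) (e : P → P) :
    PreNet (GluedP N C₁ C₂) (GluedT N C₁ C₂) where
  pre t :=
    match t.1 with
    | Sum.inl t' => {x | ∃ q ∈ N.pre t', x.1 = Sum.inl q}
    | Sum.inr t' => {x | ∃ q ∈ N.pre t',
        (q ∉ C₁ ∧ x.1 = Sum.inr q) ∨ (q ∈ C₁ ∧ ∃ p ∈ C₂, e p = q ∧ x.1 = Sum.inl p)}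
  post t :=
    match t.1 with
    | Sum.inl t' => {x | ∃ q ∈ N.post t', x.1 = Sum.inl q}
    | Sum.inr t' => {x | ∃ q ∈ N.post t',
        (q ∉ C₁ ∧ x.1 = Sum.inr q) ∨ (q ∈ C₁ ∧ ∃ p ∈ C₂, e p = q ∧ x.1 = Sum.inl p)}
  init := {x | ∃ q ∈ N.init, x.1 = Sum.inl q}

/-- Projection of the glued process to the original underlying net (places). -/
def gluedFp {N : PreNet P T} {C₁ C₂ : Set P} (fp : P → P₀) (x : GluedP N C₁ C₂) : P₀ :=
  Sum.elim fp fp x.1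

/-- Projection of the glued process to the original underlying net (transitions). -/
def gluedFt {N : PreNet P T} {C₁ C₂ : Set P} (ft : T → T₀) (x : GluedT N C₁ C₂) : T₀ :=
  Sum.elim ft ft x.1

end Glue

section Game

/-- A Petri game: an underlying net whose places are partitioned into system
places (`system`) and environment places (the rest), plus a set of bad markings. -/
structure PetriGame (P₀ T₀ : Type) : Type where
  net : PreNet P₀ T₀
  system : Set P₀
  bad : Set (Set P₀)

variable {P₀ T₀ P T : Type}

/-- Winning strategy of a Petri game: a branching process of the underlying net
satisfying justified refusal, (global) safety, determinism and deadlock avoidance. -/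
structure IsWinningStrategy (G : PetriGame P₀ T₀) (N : PreNet P T)
    (fp : P → P₀) (ft : T → T₀) : Prop where
  isBP : IsBranchingProcess G.net N fp ft
  justified_refusal : ∀ C : Set P,
    C.Pairwise (fun x y => N.concurrent (Sum.inl x) (Sum.inl y)) →
    ∀ t₀ : T₀, fp '' C = G.net.pre t₀ →
    (¬ ∃ t : T, ft t = t₀ ∧ N.pre t = C) →
    ∃ p ∈ C, fp p ∈ G.system ∧ t₀ ∉ ft '' {t : T | p ∈ N.pre t}
  safety : ∀ M, N.reachable M → fp '' M ∉ G.bad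
  determinism : ∀ p : P, fp p ∈ G.system → ∀ M, N.reachable M → p ∈ M →
    {t : T | p ∈ N.pre t ∧ N.enabled M t}.Subsingleton
  deadlock_avoiding : ∀ M, N.reachable M →
    (∃ t₀ : T₀, G.net.enabled (fp '' M) t₀) → ∃ t : T, N.enabled M t

/-- The synthesis problem: existence of a winning strategy. -/
def HasWinningStrategy (G : PetriGame P₀ T₀) : Prop :=
  ∃ (P T : Type) (N : PreNet P T) (fp : P → P₀) (ft : T → T₀),
    IsWinningStrategy G N fp ft

/-- `K`-player Petri game: every reachable marking has at most `K` tokens. -/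
def PetriGame.IsKPlayer (G : PetriGame P₀ T₀) (K : ℕ) : Prop :=
  ∀ M, G.net.reachable M → M.Finite ∧ M.ncard ≤ K

end Game

section Seg

variable {P₀ T₀ P T : Type}

/-- A maximally repeated strategy: partial repetition cuts have isomorphic futures. -/
def MaximallyRepeated (N : PreNet P T) (fp : P → P₀) (ft : T → T₀) : Prop :=
  ∀ t₁ t₂ : T, prc N fp t₁ t₂ →
    BPEquiv (futNet N (lkc N t₁)) (fun p => fp p.1) (fun s => ft s.1)
            (futNet N (lkc N t₂)) (fun p => fp p.1) (fun s => ft s.1)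

/-- Conditions (1) and (2) of a synchronisation segment of `t`:
`S ≤ Fut(B, lkc(t))` and every transition of the future not belonging to `S`
either has all places of its preset causal successors of `t`, or is a partial
repetition of a transition inside a loop of `S`. -/
def SegCond (N₀ : PreNet P₀ T₀) (N : PreNet P T) (fp : P → P₀) (ft : T → T₀) (t : T)
    {Ps Ts : Type} (S : PreNet Ps Ts) (fps : Ps → P₀) (fts : Ts → T₀) : Prop :=
  IsBranchingProcess { N₀ with init := lkm N fp t } S fps fts ∧
  ∃ (gp : Ps → FutP N (lkc N t)) (gt : Ts → FutT N (lkc N t)),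
    IsNetHom S (futNet N (lkc N t)) gp gt ∧
    (∀ p, fp (gp p).1 = fps p) ∧ (∀ s, ft (gt s).1 = fts s) ∧
    Function.Injective gp ∧ Function.Injective gt ∧
    ∀ t' : FutT N (lkc N t), t' ∉ Set.range gt →
      (∀ q ∈ N.pre t'.1, N.le (Sum.inr t) (Sum.inl q)) ∨
      (∃ s₁ s₂ s₃ : Ts, prcLoop N fp (gt s₁).1 (gt s₂).1 ∧
        N.le (Sum.inr (gt s₃).1) (Sum.inr (gt s₂).1) ∧ prc N fp t'.1 (gt s₃).1)

/-- `S` is a synchronisation segment `Seg(t)`: a smallest branching process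
(w.r.t. the subprocess relation) satisfying the segment conditions. -/
def IsSyncSegment (N₀ : PreNet P₀ T₀) (N : PreNet P T) (fp : P → P₀) (ft : T → T₀) (t : T)
    {Ps Ts : Type} (S : PreNet Ps Ts) (fps : Ps → P₀) (fts : Ts → T₀) : Prop :=
  SegCond N₀ N fp ft t S fps fts ∧
  ∀ (Ps' Ts' : Type) (S' : PreNet Ps' Ts') (fps' : Ps' → P₀) (fts' : Ts' → T₀),
    SegCond N₀ N fp ft t S' fps' fts' → BPle S fps fts S' fps' fts'

end Seg

end PG

/-!
A condition of the unfolding is a place of `N₀` tagged with the event producing it, and an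
event is a transition of `N₀` tagged with the conditions it consumes, so every node records
its causal history. The events whose preset projects bijectively onto the preset of their
label and is free of self-conflict form a branching process, and any branching process embeds
into it by sending each node to its history (well-founded recursion along the flow relation).
A homomorphism from an occurrence net into a branching process is determined by the
projections, since a node there is determined by its label and its preset or producer; so
two maximal branching processes, embedding into each other, are isomorphic.
-/

theorem Set.BijOn.codRestrict {α β : Type*} {Q : β → Prop} {f : α → β} (hf : ∀ a, Q (f a))
    {s : Set α} {t : Set β} (h : Set.BijOn f s t) :
    Set.BijOn (fun a => (⟨f a, hf a⟩ : Subtype Q)) s {b | b.1 ∈ t} :=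
  ⟨fun _ ha => h.mapsTo ha, fun _ ha _ ha' he => h.injOn ha ha' (congrArg Subtype.val he),
    fun b hb => by
      obtain ⟨a, ha, hab⟩ := h.surjOn hb
      exact ⟨a, ha, Subtype.ext hab⟩⟩

theorem Set.BijOn.comp_subtype_val {α β : Type*} {Q : α → Prop} {f : α → β} {s : Set α}
    {t : Set β} (h : Set.BijOn f s t) (hs : ∀ a ∈ s, Q a) :
    Set.BijOn (f ∘ Subtype.val) {a : Subtype Q | a.1 ∈ s} t :=
  ⟨fun _ ha => h.mapsTo ha, fun _ ha _ ha' he => Subtype.ext (h.injOn ha ha' he),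
    fun b hb => by
      obtain ⟨a, ha, rfl⟩ := h.surjOn hb
      exact ⟨⟨a, hs a ha⟩, ha, rfl⟩⟩

namespace PG

namespace PreNet

variable {P T : Type} {N : PreNet P T}

theorem wellFounded_flow (hac : ∀ x, ¬ N.lt x x) (hfin : ∀ x, {y | N.le y x}.Finite) :
    WellFounded N.flow := by
  have : IsStrictOrder _ N.lt := { irrefl := hac, trans := fun _ _ _ => Relation.TransGen.trans }
  refine ⟨fun x => (Set.WellFoundedOn.acc_iff_wellFoundedOn.out 0 1).2 ?_⟩
  exact ((hfin x).wellFoundedOn (r := N.lt)).mono' fun _ _ _ _ h => Relation.TransGen.single h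

theorem acyclic_of_wellFounded (hwf : WellFounded N.flow) (x : P ⊕ T) : ¬ N.lt x x :=
  (hwf.transGen.irrefl).irrefl x

theorem finite_le_of_wellFounded (hwf : WellFounded N.flow)
    (hpred : ∀ x, {y | N.flow y x}.Finite) (x : P ⊕ T) : {y | N.le y x}.Finite := by
  induction x using hwf.induction with
  | _ x ih =>
    refine ((Set.finite_singleton x).union ((hpred x).biUnion ih)).subset fun y hy => ?_
    rcases Relation.ReflTransGen.cases_tail hy with rfl | ⟨z, hyz, hzx⟩
    · exact Or.inl rfl
    · exact Or.inr (Set.mem_biUnion hzx hyz)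

def restrict (N : PreNet P T) (S : P ⊕ T → Prop) :
    PreNet {p // S (.inl p)} {t // S (.inr t)} where
  pre t := {p | p.1 ∈ N.pre t.1}
  post t := {p | p.1 ∈ N.post t.1}
  init := {p | p.1 ∈ N.init}

variable {S : P ⊕ T → Prop}

theorem flow_restrict {x y : {p // S (.inl p)} ⊕ {t // S (.inr t)}} :
    (N.restrict S).flow x y ↔ N.flow (Sum.map Subtype.val Subtype.val x)
      (Sum.map Subtype.val Subtype.val y) := by
  rcases x with x | x <;> rcases y with y | y <;> exact Iff.rfl

theorem le_of_le_restrict {x y : {p // S (.inl p)} ⊕ {t // S (.inr t)}}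
    (h : (N.restrict S).le x y) :
    N.le (Sum.map Subtype.val Subtype.val x) (Sum.map Subtype.val Subtype.val y) :=
  h.lift _ fun _ _ => flow_restrict.1

theorem lt_of_lt_restrict {x y : {p // S (.inl p)} ⊕ {t // S (.inr t)}}
    (h : (N.restrict S).lt x y) :
    N.lt (Sum.map Subtype.val Subtype.val x) (Sum.map Subtype.val Subtype.val y) :=
  h.lift _ fun _ _ => flow_restrict.1

theorem conflict_of_conflict_restrict {x y : {p // S (.inl p)} ⊕ {t // S (.inr t)}}
    (h : (N.restrict S).conflict x y) :
    N.conflict (Sum.map Subtype.val Subtype.val x) (Sum.map Subtype.val Subtype.val y) := by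
  obtain ⟨t₁, t₂, hne, ⟨c, hc₁, hc₂⟩, h₁, h₂⟩ := h
  exact ⟨t₁.1, t₂.1, Subtype.coe_ne_coe.2 hne, ⟨c.1, hc₁, hc₂⟩,
    le_of_le_restrict h₁, le_of_le_restrict h₂⟩

end PreNet

section Occurrence

variable {P T : Type} {N : PreNet P T}

theorem IsOccurrenceNet.mem_init_iff (h : IsOccurrenceNet N) {p : P} : p ∈ N.init ↔ ∀ t, p ∉ N.post t := by
  rw [h.init_eq]; rfl

theorem IsOccurrenceNet.mem_init_or_exists_mem_post (h : IsOccurrenceNet N) (p : P) :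
    p ∈ N.init ∨ ∃ t, p ∈ N.post t := by
  rw [h.mem_init_iff]
  exact (em _).imp_right not_forall_not.1

theorem IsOccurrenceNet.wellFounded_flow (h : IsOccurrenceNet N) : WellFounded N.flow :=
  PreNet.wellFounded_flow h.acyclic h.finitely_preceded

end Occurrence

section Hom

variable {P₁ T₁ P₂ T₂ P₃ T₃ : Type}

theorem IsNetHom.id (N : PreNet P₁ T₁) : IsNetHom N N id id :=
  ⟨fun _ => Set.bijOn_id _, fun _ => Set.bijOn_id _, Set.bijOn_id _⟩

theorem IsNetHom.comp {N₁ : PreNet P₁ T₁} {N₂ : PreNet P₂ T₂} {N₃ : PreNet P₃ T₃}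
    {g : P₁ → P₂} {h : T₁ → T₂} {g' : P₂ → P₃} {h' : T₂ → T₃}
    (h₂₃ : IsNetHom N₂ N₃ g' h') (h₁₂ : IsNetHom N₁ N₂ g h) :
    IsNetHom N₁ N₃ (g' ∘ g) (h' ∘ h) :=
  ⟨fun t => (h₂₃.pre_bij (h t)).comp (h₁₂.pre_bij t),
   fun t => (h₂₃.post_bij (h t)).comp (h₁₂.post_bij t),
   h₂₃.init_bij.comp h₁₂.init_bij⟩

theorem IsNetHom.codRestrict {N₁ : PreNet P₁ T₁} {N₂ : PreNet P₂ T₂} {S : P₂ ⊕ T₂ → Prop}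
    {g : P₁ → P₂} {h : T₁ → T₂} (hom : IsNetHom N₁ N₂ g h) (hg : ∀ p, S (.inl (g p)))
    (hh : ∀ t, S (.inr (h t))) :
    IsNetHom N₁ (N₂.restrict S) (fun p => ⟨g p, hg p⟩) (fun t => ⟨h t, hh t⟩) :=
  ⟨fun t => (hom.pre_bij t).codRestrict (Q := fun p => S (.inl p)) hg,
    fun t => (hom.post_bij t).codRestrict (Q := fun p => S (.inl p)) hg,
    hom.init_bij.codRestrict (Q := fun p => S (.inl p)) hg⟩

end Hom

section Unique

variable {P₀ T₀ P₁ T₁ P₂ T₂ : Type} {N₀ : PreNet P₀ T₀}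

theorem IsNetHom.eq_of_comp_eq {B₁ : PreNet P₁ T₁} {B₂ : PreNet P₂ T₂} {fp₂ : P₂ → P₀}
    {ft₂ : T₂ → T₀} (hB₁ : IsOccurrenceNet B₁) (hB₂ : IsBranchingProcess N₀ B₂ fp₂ ft₂)
    {g g' : P₁ → P₂} {h h' : T₁ → T₂} (hom : IsNetHom B₁ B₂ g h) (hom' : IsNetHom B₁ B₂ g' h')
    (hg : fp₂ ∘ g = fp₂ ∘ g') (hh : ft₂ ∘ h = ft₂ ∘ h') : g = g' ∧ h = h' := by
  have key (x : P₁ ⊕ T₁) : Sum.elim (fun p => g p = g' p) (fun t => h t = h' t) x := by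
    induction x using hB₁.wellFounded_flow.induction with
    | _ x ih =>
      rcases x with p | t
      · rcases hB₁.mem_init_or_exists_mem_post p with hp | ⟨t, ht⟩
        · exact hB₂.hom.init_bij.injOn (hom.init_bij.mapsTo hp) (hom'.init_bij.mapsTo hp)
            (congrFun hg p)
        · have hht : h t = h' t := ih (.inr t) ht
          exact (hB₂.hom.post_bij (h t)).injOn ((hom.post_bij t).mapsTo ht)
            (hht ▸ (hom'.post_bij t).mapsTo ht) (congrFun hg p)
      · refine hB₂.unique _ _ ?_ (congrFun hh t)
        rw [← (hom.pre_bij t).image_eq, ← (hom'.pre_bij t).image_eq]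
        exact Set.image_congr fun q hq => ih (.inl q) hq
  exact ⟨funext fun p => key (.inl p), funext fun t => key (.inr t)⟩

theorem BPEquiv.of_BPle_of_BPle {U₁ : PreNet P₁ T₁} {fp₁ : P₁ → P₀} {ft₁ : T₁ → T₀}
    {U₂ : PreNet P₂ T₂} {fp₂ : P₂ → P₀} {ft₂ : T₂ → T₀}
    (hU₁ : IsBranchingProcess N₀ U₁ fp₁ ft₁) (hU₂ : IsBranchingProcess N₀ U₂ fp₂ ft₂)
    (h₁₂ : BPle U₁ fp₁ ft₁ U₂ fp₂ ft₂) (h₂₁ : BPle U₂ fp₂ ft₂ U₁ fp₁ ft₁) :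
    BPEquiv U₁ fp₁ ft₁ U₂ fp₂ ft₂ := by
  obtain ⟨g, h, hom, hg, hh, -, -⟩ := h₁₂
  obtain ⟨g', h', hom', hg', hh', -, -⟩ := h₂₁
  obtain ⟨hgg', hhh'⟩ := (hom'.comp hom).eq_of_comp_eq hU₁.occ hU₁ (IsNetHom.id U₁)
    (by rw [← Function.comp_assoc, hg', hg, Function.comp_id])
    (by rw [← Function.comp_assoc, hh', hh, Function.comp_id])
  obtain ⟨hg'g, hh'h⟩ := (hom.comp hom').eq_of_comp_eq hU₂.occ hU₂ (IsNetHom.id U₂)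
    (by rw [← Function.comp_assoc, hg, hg', Function.comp_id])
    (by rw [← Function.comp_assoc, hh, hh', Function.comp_id])
  exact ⟨g, h, hom, hg, hh, Function.bijective_iff_has_inverse.2 ⟨g', congrFun hgg', congrFun hg'g⟩,
    Function.bijective_iff_has_inverse.2 ⟨h', congrFun hhh', congrFun hh'h⟩⟩

end Unique

section RawNet

variable {P₀ T₀ : Type}

/-- An event records the transition of `N₀` it is an occurrence of and the conditions it
consumes; a condition records a place of `N₀` and the event producing it (`none` for
initial conditions). -/
structure Event (P₀ T₀ : Type) : Type where
  preList : List (Option (Event P₀ T₀) × P₀)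
  label : T₀

abbrev Condition (P₀ T₀ : Type) : Type := Option (Event P₀ T₀) × P₀

def rawNet (N₀ : PreNet P₀ T₀) : PreNet (Condition P₀ T₀) (Event P₀ T₀) where
  pre e := {c | c ∈ e.preList}
  post e := {c | c.1 = some e ∧ c.2 ∈ N₀.post e.label}
  init := {c | c.1 = none ∧ c.2 ∈ N₀.init}

instance Event.setoid : Setoid (Event P₀ T₀) where
  r e e' := {c | c ∈ e.preList} = {c | c ∈ e'.preList} ∧ e.label = e'.label
  iseqv := ⟨fun _ => ⟨rfl, rfl⟩, fun h => ⟨h.1.symm, h.2.symm⟩,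
    fun h h' => ⟨h.1.trans h'.1, h.2.trans h'.2⟩⟩

/-- Events with the same preset and label are identified by choosing a representative; the
unfolding keeps only representatives, so the order of `preList` does not matter. -/
noncomputable def Event.canon (e : Event P₀ T₀) : Event P₀ T₀ := (⟦e⟧ : Quotient Event.setoid).out

theorem Event.canon_equiv (e : Event P₀ T₀) : e.canon ≈ e := Quotient.mk_out e

theorem Event.canon_canon (e : Event P₀ T₀) : e.canon.canon = e.canon := by
  unfold Event.canon
  rw [Quotient.out_eq]

theorem Event.canon_eq_canon {e e' : Event P₀ T₀} (h : e ≈ e') : e.canon = e'.canon :=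
  congrArg Quotient.out (Quotient.sound h)

variable {N₀ : PreNet P₀ T₀}

theorem rawNet_flow_sizeOf_lt {x y : Condition P₀ T₀ ⊕ Event P₀ T₀} (h : (rawNet N₀).flow x y) :
    sizeOf x < sizeOf y := by
  match x, y, h with
  | .inl c, .inr ⟨l, t⟩, h =>
    have := List.sizeOf_lt_of_mem (show c ∈ l from h)
    simp only [Sum.inl.sizeOf_spec, Sum.inr.sizeOf_spec, Event.mk.sizeOf_spec]
    omega
  | .inr e, .inl (_, p), ⟨rfl, _⟩ =>
    simp only [Sum.inl.sizeOf_spec, Sum.inr.sizeOf_spec, Prod.mk.sizeOf_spec,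
      Option.some.sizeOf_spec]
    omega

theorem rawNet_wellFounded_flow : WellFounded (rawNet N₀).flow :=
  Subrelation.wf rawNet_flow_sizeOf_lt (measure sizeOf).wf

theorem rawNet_finite_flow (x : Condition P₀ T₀ ⊕ Event P₀ T₀) :
    {y | (rawNet N₀).flow y x}.Finite := by
  rcases x with ⟨_ | e, p⟩ | e
  · refine Set.finite_empty.subset ?_
    rintro (_ | _) ⟨⟨⟩⟩
  · refine (Set.finite_singleton (.inr e)).subset ?_
    rintro (_ | e') h
    · exact h.elim
    · exact congrArg Sum.inr (Option.some_inj.1 h.1).symm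
  · refine (e.preList.finite_toSet.image Sum.inl).subset ?_
    rintro (c | _) h
    · exact ⟨c, h, rfl⟩
    · exact h.elim

theorem rawNet_bijOn_post (e : Event P₀ T₀) :
    Set.BijOn Prod.snd ((rawNet N₀).post e) (N₀.post e.label) :=
  ⟨fun _ h => h.2, fun _ h _ h' hc => Prod.ext (h.1.trans h'.1.symm) hc,
    fun p hp => ⟨(some e, p), ⟨rfl, hp⟩, rfl⟩⟩

theorem rawNet_bijOn_init : Set.BijOn Prod.snd (rawNet N₀).init N₀.init :=
  ⟨fun _ h => h.2, fun _ h _ h' hc => Prod.ext (h.1.trans h'.1.symm) hc,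
    fun p hp => ⟨(none, p), ⟨rfl, hp⟩, rfl⟩⟩

end RawNet

section Unfolding

variable {P₀ T₀ : Type}

/-- Freedom from self-conflict already forces the preset of an event to be a co-set, which
is how the unfolding is usually defined. -/
inductive IsUnfNode (N₀ : PreNet P₀ T₀) : Condition P₀ T₀ ⊕ Event P₀ T₀ → Prop
  | init {c} : c ∈ (rawNet N₀).init → IsUnfNode N₀ (.inl c)
  | post {c e} : IsUnfNode N₀ (.inr e) → c ∈ (rawNet N₀).post e → IsUnfNode N₀ (.inl c)
  | event {e} : (∀ c ∈ e.preList, IsUnfNode N₀ (.inl c)) →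
      Set.BijOn Prod.snd ((rawNet N₀).pre e) (N₀.pre e.label) →
      ¬ (rawNet N₀).conflict (.inr e) (.inr e) → e.canon = e → IsUnfNode N₀ (.inr e)

def unfolding (N₀ : PreNet P₀ T₀) :
    PreNet {c // IsUnfNode N₀ (.inl c)} {e // IsUnfNode N₀ (.inr e)} :=
  (rawNet N₀).restrict (IsUnfNode N₀)

def unfolding.fp {N₀ : PreNet P₀ T₀} (c : {c // IsUnfNode N₀ (.inl c)}) : P₀ := c.1.2

def unfolding.ft {N₀ : PreNet P₀ T₀} (e : {e // IsUnfNode N₀ (.inr e)}) : T₀ := e.1.label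

variable {N₀ : PreNet P₀ T₀}

theorem IsUnfNode.inl_cases {c : Condition P₀ T₀} (h : IsUnfNode N₀ (.inl c)) :
    c ∈ (rawNet N₀).init ∨ ∃ e, IsUnfNode N₀ (.inr e) ∧ c ∈ (rawNet N₀).post e := by
  cases h with
  | init h => exact .inl h
  | post he h => exact .inr ⟨_, he, h⟩

theorem IsUnfNode.inr_cases {e : Event P₀ T₀} (h : IsUnfNode N₀ (.inr e)) :
    (∀ c ∈ e.preList, IsUnfNode N₀ (.inl c)) ∧
      Set.BijOn Prod.snd ((rawNet N₀).pre e) (N₀.pre e.label) ∧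
      ¬ (rawNet N₀).conflict (.inr e) (.inr e) ∧ e.canon = e := by
  cases h with
  | event h₁ h₂ h₃ h₄ => exact ⟨h₁, h₂, h₃, h₄⟩

theorem isPetriNet_unfolding (hN₀ : IsPetriNet N₀) : IsPetriNet (unfolding N₀) where
  pre_nonempty := fun ⟨e, he⟩ => by
    obtain ⟨hpre, hbij, -⟩ := he.inr_cases
    obtain ⟨c, hc, -⟩ := hbij.surjOn (hN₀.pre_nonempty e.label).some_mem
    exact ⟨⟨c, hpre c hc⟩, hc⟩
  pre_finite := fun ⟨e, _⟩ =>
    e.preList.finite_toSet.preimage Subtype.val_injective.injOn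
  post_finite := fun ⟨e, _⟩ =>
    (((hN₀.post_finite e.label).image fun p => (some e, p)).subset
      fun c hc => ⟨c.2, hc.2, Prod.ext hc.1.symm rfl⟩).preimage Subtype.val_injective.injOn

theorem isOccurrenceNet_unfolding (hN₀ : IsPetriNet N₀) : IsOccurrenceNet (unfolding N₀) where
  toIsPetriNet := isPetriNet_unfolding hN₀
  acyclic x h := PreNet.acyclic_of_wellFounded rawNet_wellFounded_flow _
    (PreNet.lt_of_lt_restrict h)
  finitely_preceded x :=
    (PreNet.finite_le_of_wellFounded rawNet_wellFounded_flow rawNet_finite_flow _).preimage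
      (Sum.map_injective.2 ⟨Subtype.val_injective, Subtype.val_injective⟩).injOn
      |>.subset fun _ => PreNet.le_of_le_restrict
  place_pre_subsingleton c _ h _ h' := Subtype.ext (Option.some_inj.1 (h.1.symm.trans h'.1))
  no_self_conflict t h := t.2.inr_cases.2.2.1 (PreNet.conflict_of_conflict_restrict h)
  init_eq := by
    ext ⟨c, hc⟩
    refine ⟨fun h e he => ?_, fun h => ?_⟩
    · exact Option.some_ne_none _ (he.1.symm.trans h.1)
    · rcases hc.inl_cases with hinit | ⟨e, he, hpost⟩
      · exact hinit
      · exact (h ⟨e, he⟩ hpost).elim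

theorem isBranchingProcess_unfolding (hN₀ : IsPetriNet N₀) :
    IsBranchingProcess N₀ (unfolding N₀) unfolding.fp unfolding.ft where
  occ := isOccurrenceNet_unfolding hN₀
  hom :=
    ⟨fun ⟨_, he⟩ => he.inr_cases.2.1.comp_subtype_val he.inr_cases.1,
      fun ⟨_, he⟩ => (rawNet_bijOn_post _).comp_subtype_val fun _ => .post he,
      rawNet_bijOn_init.comp_subtype_val fun _ => .init⟩
  unique := fun ⟨e₁, he₁⟩ ⟨e₂, he₂⟩ hpre hlabel => by
    have hraw : (rawNet N₀).pre e₁ = (rawNet N₀).pre e₂ := by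
      ext c
      constructor
      · intro hc
        exact (Set.ext_iff.1 hpre ⟨c, he₁.inr_cases.1 c hc⟩).1 hc
      · intro hc
        exact (Set.ext_iff.1 hpre ⟨c, he₂.inr_cases.1 c hc⟩).2 hc
    rw [Subtype.mk.injEq, ← he₁.inr_cases.2.2.2, ← he₂.inr_cases.2.2.2]
    exact Event.canon_eq_canon ⟨hraw, hlabel⟩

end Unfolding

section Embedding

variable {P₀ T₀ P T : Type} {N₀ : PreNet P₀ T₀} {B : PreNet P T} {fp : P → P₀} {ft : T → T₀}

noncomputable def embedStep (hB : IsBranchingProcess N₀ B fp ft) (x : P ⊕ T)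
    (rec : ∀ y, B.flow y x → Sum.elim (fun _ => Condition P₀ T₀) (fun _ => Event P₀ T₀) y) :
    Sum.elim (fun _ => Condition P₀ T₀) (fun _ => Event P₀ T₀) x :=
  match x, rec with
  | .inl p, rec =>
    open Classical in
    if h : ∃ t, p ∈ B.post t then (some (rec (.inr h.choose) h.choose_spec), fp p)
    else (none, fp p)
  | .inr t, rec =>
    Event.canon ⟨(hB.occ.toIsPetriNet.pre_finite t).toFinset.attach.toList.map
      fun q => rec (.inl q.1) ((Set.Finite.mem_toFinset _).1 q.2), ft t⟩

noncomputable def embed (hB : IsBranchingProcess N₀ B fp ft) :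
    ∀ x : P ⊕ T, Sum.elim (fun _ => Condition P₀ T₀) (fun _ => Event P₀ T₀) x :=
  hB.occ.wellFounded_flow.fix (embedStep hB)

noncomputable def embedPlace (hB : IsBranchingProcess N₀ B fp ft) (p : P) : Condition P₀ T₀ :=
  embed hB (.inl p)

noncomputable def embedEvent (hB : IsBranchingProcess N₀ B fp ft) (t : T) : Event P₀ T₀ :=
  embed hB (.inr t)

noncomputable def embedNode (hB : IsBranchingProcess N₀ B fp ft) :
    P ⊕ T → Condition P₀ T₀ ⊕ Event P₀ T₀ :=
  Sum.map (embedPlace hB) (embedEvent hB)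

variable (hB : IsBranchingProcess N₀ B fp ft)

theorem embedPlace_of_mem_init {p : P} (hp : p ∈ B.init) : embedPlace hB p = (none, fp p) := by
  rw [embedPlace, embed, WellFounded.fix_eq]
  exact dif_neg (by simpa [hB.occ.mem_init_iff] using hp)

theorem embedPlace_of_mem_post {p : P} {t : T} (hp : p ∈ B.post t) :
    embedPlace hB p = (some (embedEvent hB t), fp p) := by
  have h : ∃ t, p ∈ B.post t := ⟨t, hp⟩
  rw [embedPlace, embed, WellFounded.fix_eq]
  refine (dif_pos h).trans ?_
  change (some (embedEvent hB h.choose), fp p) = _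
  rw [hB.occ.place_pre_subsingleton p h.choose_spec hp]

theorem embedPlace_snd (p : P) : (embedPlace hB p).2 = fp p := by
  rcases hB.occ.mem_init_or_exists_mem_post p with hp | ⟨t, ht⟩
  · rw [embedPlace_of_mem_init hB hp]
  · rw [embedPlace_of_mem_post hB ht]

theorem embedEvent_eq (t : T) : embedEvent hB t = Event.canon
    ⟨(hB.occ.toIsPetriNet.pre_finite t).toFinset.attach.toList.map
      fun q => embedPlace hB q.1, ft t⟩ := by
  rw [embedEvent, embed, WellFounded.fix_eq]
  rfl

theorem embedEvent_label (t : T) : (embedEvent hB t).label = ft t := by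
  rw [embedEvent_eq]
  exact (Event.canon_equiv _).2

theorem canon_embedEvent (t : T) : (embedEvent hB t).canon = embedEvent hB t := by
  rw [embedEvent_eq]
  exact Event.canon_canon _

theorem rawNet_pre_embedEvent (t : T) :
    (rawNet N₀).pre (embedEvent hB t) = embedPlace hB '' B.pre t := by
  rw [embedEvent_eq]
  refine (Event.canon_equiv _).1.trans ?_
  ext c
  simp [List.mem_map, Finset.mem_toList]

theorem embedNode_injective : Function.Injective (embedNode hB) := by
  intro x
  induction x using hB.occ.wellFounded_flow.induction with
  | _ x ih =>
  rintro (p' | t') hxy <;> rcases x with p | t <;> simp only [embedNode, Sum.map_inl,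
    Sum.map_inr, reduceCtorEq, Sum.inl.injEq, Sum.inr.injEq] at hxy ⊢
  · rcases hB.occ.mem_init_or_exists_mem_post p with hp | ⟨t, hp⟩ <;>
      rcases hB.occ.mem_init_or_exists_mem_post p' with hp' | ⟨t', hp'⟩
    · rw [embedPlace_of_mem_init hB hp, embedPlace_of_mem_init hB hp'] at hxy
      exact hB.hom.init_bij.injOn hp hp' (Prod.mk.inj hxy).2
    · rw [embedPlace_of_mem_init hB hp, embedPlace_of_mem_post hB hp'] at hxy
      exact absurd (Prod.mk.inj hxy).1 (Option.some_ne_none _).symm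
    · rw [embedPlace_of_mem_post hB hp, embedPlace_of_mem_init hB hp'] at hxy
      exact absurd (Prod.mk.inj hxy).1 (Option.some_ne_none _)
    · rw [embedPlace_of_mem_post hB hp, embedPlace_of_mem_post hB hp'] at hxy
      obtain ⟨hevent, hlabel⟩ := Prod.mk.inj hxy
      obtain rfl : t = t' :=
        Sum.inr.inj (ih (.inr t) hp (a₂ := .inr t') (congrArg Sum.inr (Option.some_inj.1 hevent)))
      exact (hB.hom.post_bij t).injOn hp hp' hlabel
  · have himage : embedPlace hB '' B.pre t = embedPlace hB '' B.pre t' := by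
      rw [← rawNet_pre_embedEvent, ← rawNet_pre_embedEvent, hxy]
    have hinj {q : P} (hq : q ∈ B.pre t) {q' : P} (he : embedPlace hB q = embedPlace hB q') :
        q = q' :=
      Sum.inl.inj (ih (.inl q) hq (a₂ := .inl q') (congrArg Sum.inl he))
    refine hB.unique t t' (Set.ext fun q => ⟨fun hq => ?_, fun hq => ?_⟩) ?_
    · obtain ⟨q', hq', he⟩ := himage ▸ Set.mem_image_of_mem (embedPlace hB) hq
      exact hinj hq he.symm ▸ hq'
    · obtain ⟨q', hq', he⟩ := himage.symm ▸ Set.mem_image_of_mem (embedPlace hB) hq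
      exact (hinj hq' he) ▸ hq'
    · rw [← embedEvent_label hB, ← embedEvent_label hB, hxy]

theorem embedPlace_injective : Function.Injective (embedPlace hB) :=
  fun _ _ h => Sum.inl.inj (embedNode_injective hB (congrArg Sum.inl h))

theorem embedEvent_injective : Function.Injective (embedEvent hB) :=
  fun _ _ h => Sum.inr.inj (embedNode_injective hB (congrArg Sum.inr h))

theorem isNetHom_embed : IsNetHom B (rawNet N₀) (embedPlace hB) (embedEvent hB) where
  pre_bij t := rawNet_pre_embedEvent hB t ▸ (embedPlace_injective hB).injOn.bijOn_image
  post_bij t := by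
    refine ⟨fun q hq => ?_, (embedPlace_injective hB).injOn, fun c ⟨hc, hc'⟩ => ?_⟩
    · rw [embedPlace_of_mem_post hB hq]
      exact ⟨rfl, embedEvent_label hB t ▸ (hB.hom.post_bij t).mapsTo hq⟩
    · rw [embedEvent_label] at hc'
      obtain ⟨q, hq, hqc⟩ := (hB.hom.post_bij t).surjOn hc'
      exact ⟨q, hq, by rw [embedPlace_of_mem_post hB hq, ← hc, hqc]⟩
  init_bij := by
    refine ⟨fun p hp => ?_, (embedPlace_injective hB).injOn, fun c ⟨hc, hc'⟩ => ?_⟩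
    · rw [embedPlace_of_mem_init hB hp]
      exact ⟨rfl, hB.hom.init_bij.mapsTo hp⟩
    · obtain ⟨p, hp, hpc⟩ := hB.hom.init_bij.surjOn hc'
      exact ⟨p, hp, by rw [embedPlace_of_mem_init hB hp, ← hc, hpc]⟩

theorem exists_flow_of_flow_embedNode {z : Condition P₀ T₀ ⊕ Event P₀ T₀} {x : P ⊕ T}
    (h : (rawNet N₀).flow z (embedNode hB x)) : ∃ y, B.flow y x ∧ embedNode hB y = z := by
  rcases z with c | e <;> rcases x with p | t
  · exact h.elim
  · obtain ⟨q, hq, rfl⟩ : c ∈ embedPlace hB '' B.pre t := rawNet_pre_embedEvent hB t ▸ h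
    exact ⟨.inl q, hq, rfl⟩
  · have hp' : (embedPlace hB p).1 = some e := h.1
    rcases hB.occ.mem_init_or_exists_mem_post p with hp | ⟨t, hp⟩
    · rw [embedPlace_of_mem_init hB hp] at hp'
      exact absurd hp'.symm (Option.some_ne_none _)
    · rw [embedPlace_of_mem_post hB hp, Option.some_inj] at hp'
      exact ⟨.inr t, hp, congrArg Sum.inr hp'⟩
  · exact h.elim

theorem exists_le_of_le_embedNode {z : Condition P₀ T₀ ⊕ Event P₀ T₀} {x : P ⊕ T}
    (h : (rawNet N₀).le z (embedNode hB x)) : ∃ y, B.le y x ∧ embedNode hB y = z := by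
  induction h using Relation.ReflTransGen.head_induction_on with
  | refl => exact ⟨x, .refl, rfl⟩
  | head hflow _ ih =>
    obtain ⟨y, hyx, rfl⟩ := ih
    obtain ⟨y', hy'y, rfl⟩ := exists_flow_of_flow_embedNode hB hflow
    exact ⟨y', .head hy'y hyx, rfl⟩

theorem conflict_of_conflict_embedNode {x y : P ⊕ T}
    (h : (rawNet N₀).conflict (embedNode hB x) (embedNode hB y)) : B.conflict x y := by
  obtain ⟨e₁, e₂, hne, ⟨c, hc₁, hc₂⟩, h₁, h₂⟩ := h
  obtain ⟨_ | t₁, ht₁, he₁⟩ := exists_le_of_le_embedNode hB h₁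
  · cases he₁
  obtain ⟨_ | t₂, ht₂, he₂⟩ := exists_le_of_le_embedNode hB h₂
  · cases he₂
  cases he₁; cases he₂
  obtain ⟨q₁, hq₁, rfl⟩ : c ∈ embedPlace hB '' B.pre t₁ := rawNet_pre_embedEvent hB t₁ ▸ hc₁
  obtain ⟨q₂, hq₂, hq⟩ : embedPlace hB q₁ ∈ embedPlace hB '' B.pre t₂ :=
    rawNet_pre_embedEvent hB t₂ ▸ hc₂
  exact ⟨t₁, t₂, fun h => hne (congrArg _ h), ⟨q₁, hq₁, embedPlace_injective hB hq ▸ hq₂⟩,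
    ht₁, ht₂⟩

theorem isUnfNode_embedNode (x : P ⊕ T) : IsUnfNode N₀ (embedNode hB x) := by
  induction x using hB.occ.wellFounded_flow.induction with
  | _ x ih =>
  rcases x with p | t
  · rcases hB.occ.mem_init_or_exists_mem_post p with hp | ⟨t, hp⟩
    · exact .init ((isNetHom_embed hB).init_bij.mapsTo hp)
    · exact .post (ih (.inr t) hp) (((isNetHom_embed hB).post_bij t).mapsTo hp)
  · refine .event (fun c hc => ?_) ?_ (fun h => ?_) (canon_embedEvent hB t)
    · obtain ⟨q, hq, rfl⟩ : c ∈ embedPlace hB '' B.pre t := rawNet_pre_embedEvent hB t ▸ hc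
      exact ih (.inl q) hq
    · rw [rawNet_pre_embedEvent, embedEvent_label,
        ← Set.bijOn_comp_iff (embedPlace_injective hB).injOn,
        show Prod.snd ∘ embedPlace hB = fp from funext (embedPlace_snd hB)]
      exact hB.hom.pre_bij t
    · exact hB.occ.no_self_conflict t (conflict_of_conflict_embedNode hB h)

theorem BPle_unfolding (hB : IsBranchingProcess N₀ B fp ft) :
    BPle B fp ft (unfolding N₀) unfolding.fp unfolding.ft :=
  ⟨_, _, (isNetHom_embed hB).codRestrict (fun p => isUnfNode_embedNode hB (.inl p))
      (fun t => isUnfNode_embedNode hB (.inr t)),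
    funext (embedPlace_snd hB), funext (embedEvent_label hB),
    fun _ _ h => embedPlace_injective hB (congrArg Subtype.val h),
    fun _ _ h => embedEvent_injective hB (congrArg Subtype.val h)⟩

end Embedding

theorem unfolding_exists_unique_general {P₀ T₀ : Type}
    (N₀ : PreNet P₀ T₀) (hN₀ : IsPetriNet N₀) :
    (∃ (P T : Type) (U : PreNet P T) (fpU : P → P₀) (ftU : T → T₀),
      IsBranchingProcess N₀ U fpU ftU ∧
      ∀ (P' T' : Type) (B : PreNet P' T') (fp : P' → P₀) (ft : T' → T₀),
        IsBranchingProcess N₀ B fp ft → BPle B fp ft U fpU ftU) ∧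
    (∀ (P₁ T₁ P₂ T₂ : Type) (U₁ : PreNet P₁ T₁) (fp₁ : P₁ → P₀) (ft₁ : T₁ → T₀)
       (U₂ : PreNet P₂ T₂) (fp₂ : P₂ → P₀) (ft₂ : T₂ → T₀),
      IsBranchingProcess N₀ U₁ fp₁ ft₁ →
      IsBranchingProcess N₀ U₂ fp₂ ft₂ →
      (∀ (P' T' : Type) (B : PreNet P' T') (fp : P' → P₀) (ft : T' → T₀),
        IsBranchingProcess N₀ B fp ft → BPle B fp ft U₁ fp₁ ft₁) →
      (∀ (P' T' : Type) (B : PreNet P' T') (fp : P' → P₀) (ft : T' → T₀),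
        IsBranchingProcess N₀ B fp ft → BPle B fp ft U₂ fp₂ ft₂) →
      BPEquiv U₁ fp₁ ft₁ U₂ fp₂ ft₂) :=
  ⟨⟨_, _, unfolding N₀, unfolding.fp, unfolding.ft, isBranchingProcess_unfolding hN₀,
      fun _ _ _ _ _ hB => BPle_unfolding hB⟩,
    fun _ _ _ _ _ _ _ _ _ _ hU₁ hU₂ hmax₁ hmax₂ =>
      BPEquiv.of_BPle_of_BPle hU₁ hU₂ (hmax₂ _ _ _ _ _ hU₁) (hmax₁ _ _ _ _ _ hU₂)⟩

/-- Every finite safe Petri net `N₀` has an unfolding: a branching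
process of `N₀` that is maximal with respect to the subprocess relation `≤`
(every branching process of `N₀` embeds into it), and any two such maximal
branching processes of `N₀` are isomorphic. -/
theorem unfolding_exists_unique {P₀ T₀ : Type} [Finite P₀] [Finite T₀]
    (N₀ : PreNet P₀ T₀) (hN₀ : IsPetriNet N₀) (hsafe : N₀.Safe) :
    (∃ (P T : Type) (U : PreNet P T) (fpU : P → P₀) (ftU : T → T₀),
      IsBranchingProcess N₀ U fpU ftU ∧
      ∀ (P' T' : Type) (B : PreNet P' T') (fp : P' → P₀) (ft : T' → T₀),
        IsBranchingProcess N₀ B fp ft → BPle B fp ft U fpU ftU) ∧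
    (∀ (P₁ T₁ P₂ T₂ : Type) (U₁ : PreNet P₁ T₁) (fp₁ : P₁ → P₀) (ft₁ : T₁ → T₀)
       (U₂ : PreNet P₂ T₂) (fp₂ : P₂ → P₀) (ft₂ : T₂ → T₀),
      IsBranchingProcess N₀ U₁ fp₁ ft₁ →
      IsBranchingProcess N₀ U₂ fp₂ ft₂ →
      (∀ (P' T' : Type) (B : PreNet P' T') (fp : P' → P₀) (ft : T' → T₀),
        IsBranchingProcess N₀ B fp ft → BPle B fp ft U₁ fp₁ ft₁) →
      (∀ (P' T' : Type) (B : PreNet P' T') (fp : P' → P₀) (ft : T' → T₀),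
        IsBranchingProcess N₀ B fp ft → BPle B fp ft U₂ fp₂ ft₂) →
      BPEquiv U₁ fp₁ ft₁ U₂ fp₂ ft₂) :=
  unfolding_exists_unique_general N₀ hN₀

end PG
end

section
/- (Correctness of the 3-SAT reduction.) Let F = (x¹₁ ∨ x¹₂ ∨ x¹₃) ∧ … ∧ (xⁿ₁ ∨ xⁿ₂ ∨ xⁿ₃) be a 3-CNF formula over variables x₁, …, x_m, each clause having exactly three literals. Let G_F be the 2-player Petri game in which all places are system places and there are no bad places besides the bad markings: one token moves through a sequence of n choice gadgets, in the i-th gadget branching to a place labelled x_i or a place labelled x̄_i and then rejoining; a second token moves through a sequence of n clause gadgets, in the i-th gadget branching to one of three places labelled by the literals xⁱ₁, xⁱ₂, xⁱ₃ of clause i and then rejoining; the bad markings are all pairs {x_k, xⁱ_j} with xⁱ_j = x̄_k and all pairs {x̄_k, xⁱ_j} with xⁱ_j = x_k. Then G_F has a winning strategy if and only if F is satisfiable. -/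
namespace PG

/-- Places of the 3-SAT Petri game: the top token moves through `m` choice
gadgets (one per variable), the bottom token through `n` clause gadgets. -/
inductive SatPlace (n m : ℕ) : Type
  | topMid : Fin (m + 1) → SatPlace n m
  | topLit : Fin m → Bool → SatPlace n m
  | botMid : Fin (n + 1) → SatPlace n m
  | botLit : Fin n → Fin 3 → SatPlace n m

/-- Transitions of the 3-SAT Petri game. -/
inductive SatTrans (n m : ℕ) : Type
  | topIn : Fin m → Bool → SatTrans n m
  | topOut : Fin m → Bool → SatTrans n m
  | botIn : Fin n → Fin 3 → SatTrans n m
  | botOut : Fin n → Fin 3 → SatTrans n m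

/-- The underlying net of the 3-SAT Petri game. In the `i`-th choice gadget the
top token branches to the place labelled `x_i` (`b = true`) or `x̄_i`
(`b = false`) and rejoins; in the `i`-th clause gadget the bottom token branches
to one of the three literal places of clause `i` and rejoins. -/
def satNet (n m : ℕ) : PreNet (SatPlace n m) (SatTrans n m) where
  pre t :=
    match t with
    | SatTrans.topIn i _ => {SatPlace.topMid i.castSucc}
    | SatTrans.topOut i b => {SatPlace.topLit i b}
    | SatTrans.botIn i _ => {SatPlace.botMid i.castSucc}
    | SatTrans.botOut i j => {SatPlace.botLit i j}
  post t :=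
    match t with
    | SatTrans.topIn i b => {SatPlace.topLit i b}
    | SatTrans.topOut i _ => {SatPlace.topMid i.succ}
    | SatTrans.botIn i j => {SatPlace.botLit i j}
    | SatTrans.botOut i _ => {SatPlace.botMid i.succ}
  init := {SatPlace.topMid 0, SatPlace.botMid 0}

/-- The 3-SAT Petri game `G_F` of a 3-CNF formula `F` with `n` clauses over `m`
variables. A literal is a pair `(b, k) : Bool × Fin m` (`b = true` for the
positive literal `x_k`, `b = false` for `x̄_k`). All places are system places.
The bad markings are all pairs `{x_k, xⁱ_j}` where the literal `xⁱ_j` of clause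
`i` equals `x̄_k`, and all pairs `{x̄_k, xⁱ_j}` where `xⁱ_j = x_k`. -/
def satGame (n m : ℕ) (F : Fin n → Fin 3 → Bool × Fin m) :
    PetriGame (SatPlace n m) (SatTrans n m) where
  net := satNet n m
  system := Set.univ
  bad := {M | ∃ (i : Fin n) (j : Fin 3) (k : Fin m) (b : Bool),
    F i j = (!b, k) ∧ M = {SatPlace.topLit k b, SatPlace.botLit i j}}

/-!
If `v` satisfies `F`, choose in every clause `i` a literal `c i` made true by `v`. The subnet of
the game on the places consistent with `v` and `c` (the choice token only visits the literals
`v` selects, the clause token only the literals `c i`) is an occurrence net in which every place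
has at most one outgoing transition; it is a winning strategy, and it never marks a bad pair
because the literal `c i` agrees with `v`.

Conversely, every transition of the game, hence of a strategy, moves a single token, and tokens
only move forward along their track. In a reachable marking where one token could move in the
game, let the other token move as long as the strategy allows it; once it is stuck, deadlock
avoidance forces the strategy to move the first token. So the choice token reaches a literal
place of every variable `k`, which defines `v k`, and the clause token reaches a literal place of
every clause `i`. The two runs are independent, so both places are marked at once in a reachable
marking, and safety says that the literal of clause `i` is not the negation of `v`'s choice.
-/

theorem _root_.Set.BijOn.exists_eq_singleton {α β : Type*} {f : α → β} {s : Set α} {b : β}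
    (h : Set.BijOn f s {b}) : ∃ a, s = {a} ∧ f a = b := by
  obtain ⟨a, ha, rfl⟩ := h.surjOn rfl
  refine ⟨a, Set.eq_singleton_iff_unique_mem.2 ⟨ha, fun x hx => ?_⟩, rfl⟩
  exact h.injOn hx ha (h.mapsTo hx)

theorem _root_.Set.BijOn.exists_eq_pair {α β : Type*} {f : α → β} {s : Set α} {b c : β}
    (h : Set.BijOn f s {b, c}) : ∃ a a', s = {a, a'} ∧ f a = b ∧ f a' = c := by
  obtain ⟨a, ha, rfl⟩ := h.surjOn (Set.mem_insert _ _)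
  obtain ⟨a', ha', rfl⟩ := h.surjOn (Set.mem_insert_of_mem _ rfl)
  refine ⟨a, a', Set.Subset.antisymm (fun x hx => ?_) (Set.insert_subset ha (by simpa)),
    rfl, rfl⟩
  rcases h.mapsTo hx with hxa | hxa
  · exact .inl (h.injOn hx ha hxa)
  · exact .inr (h.injOn hx ha' hxa)

namespace PreNet

variable {P T : Type} {N : PreNet P T}

theorem Fires.concat {M M' : Set P} {l : List T} {t : T} (h : N.Fires M l M')
    (ht : N.enabled M' t) : N.Fires M (l ++ [t]) (N.fire M' t) := by
  induction h with
  | nil => exact .cons ht (.nil _)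
  | cons he _ ih => exact .cons he (ih ht)

theorem reachable.fire {M : Set P} {t : T} (h : N.reachable M) (ht : N.enabled M t) :
    N.reachable (N.fire M t) :=
  ⟨_, h.choose_spec.concat ht⟩

theorem not_lt_self_of_flow_lt (f : P ⊕ T → ℕ) (hf : ∀ x y, N.flow x y → f x < f y)
    (x : P ⊕ T) : ¬ N.lt x x := by
  intro h
  have := Relation.TransGen.lift f hf x x h
  rw [Relation.transGen_eq_self] at this
  exact lt_irrefl _ this

theorem not_conflict_of_pre_inter {x y : P ⊕ T}
    (h : ∀ t₁ t₂, (N.pre t₁ ∩ N.pre t₂).Nonempty → t₁ = t₂) : ¬ N.conflict x y :=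
  fun ⟨t₁, t₂, hne, hinter, _⟩ => hne (h t₁ t₂ hinter)

def Moves (N : PreNet P T) (p p' : P) : Prop := ∃ t, N.pre t = {p} ∧ N.post t = {p'}

theorem reachable.moves {p p' q : P} (hR : N.reachable {p, q}) (h : N.Moves p p')
    (hpq : p ≠ q) : N.reachable {p', q} := by
  obtain ⟨t, hpre, hpost⟩ := h
  have hfire : N.fire {p, q} t = {p', q} := by
    rw [PreNet.fire, hpre, hpost, Set.pair_sdiff_left hpq, Set.union_comm, Set.singleton_union]
  exact hfire ▸ hR.fire (by simp [enabled, hpre])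

theorem reachable.reflTransGen_moves {p p' q : P} (hR : N.reachable {p, q})
    (h : Relation.ReflTransGen N.Moves p p')
    (hq : ∀ x, Relation.ReflTransGen N.Moves p x → x ≠ q) : N.reachable {p', q} := by
  induction h with
  | refl => exact hR
  | tail hpa hab ih => exact ih.moves hab (hq _ hpa)

def induced (N : PreNet P T) (Q : Set P) : PreNet Q {t // N.pre t ⊆ Q ∧ N.post t ⊆ Q} where
  pre t := Subtype.val ⁻¹' N.pre t.1
  post t := Subtype.val ⁻¹' N.post t.1
  init := Subtype.val ⁻¹' N.init

variable {Q : Set P}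

theorem isNetHom_induced (h : N.init ⊆ Q) :
    IsNetHom (N.induced Q) N Subtype.val Subtype.val := by
  have bijOn_val {S : Set P} (hS : S ⊆ Q) : Set.BijOn Subtype.val (Subtype.val ⁻¹' S) S :=
    ⟨fun _ hx => hx, Subtype.val_injective.injOn, fun x hx => ⟨⟨x, hS hx⟩, hx, rfl⟩⟩
  exact ⟨fun t => bijOn_val t.2.1, fun t => bijOn_val t.2.2, bijOn_val h⟩

theorem induced_flow {x y : Q ⊕ {t // N.pre t ⊆ Q ∧ N.post t ⊆ Q}}
    (h : (N.induced Q).flow x y) :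
    N.flow (Sum.map Subtype.val Subtype.val x) (Sum.map Subtype.val Subtype.val y) := by
  rcases x with p | t <;> rcases y with p' | t' <;> exact h

theorem induced_not_lt_self (h : ∀ x, ¬ N.lt x x) (x) : ¬ (N.induced Q).lt x x :=
  fun hx => h _ <|
    Relation.TransGen.lift (Sum.map Subtype.val Subtype.val) (fun _ _ => induced_flow) x x hx

theorem induced_justified_refusal (hpre : ∀ t, (N.pre t).Nonempty) (C : Set Q) (t₀ : T)
    (hC : Subtype.val '' C = N.pre t₀)
    (hno : ¬ ∃ t : {t // N.pre t ⊆ Q ∧ N.post t ⊆ Q},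
      t.1 = t₀ ∧ (N.induced Q).pre t = C) :
    ∃ p ∈ C, t₀ ∉ Subtype.val '' {t | p ∈ (N.induced Q).pre t} := by
  obtain ⟨_, p, hp, rfl⟩ := hC ▸ hpre t₀
  refine ⟨p, hp, ?_⟩
  rintro ⟨t, -, rfl⟩
  refine hno ⟨t, rfl, Set.ext fun q => ?_⟩
  change q.1 ∈ N.pre t.1 ↔ q ∈ C
  rw [← hC, Subtype.val_injective.mem_set_image]

def DeadlockAvoiding {P₀ T₀ : Type} (N₀ : PreNet P₀ T₀) (N : PreNet P T) (fp : P → P₀) :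
    Prop :=
  ∀ M, N.reachable M → (∃ t₀, N₀.enabled (fp '' M) t₀) → ∃ t, N.enabled M t

end PreNet

section Reduction

variable {n m : ℕ}

namespace SatPlace

def isTop : SatPlace n m → Bool
  | topMid _ | topLit _ _ => true
  | botMid _ | botLit _ _ => false

def trackLength (x : SatPlace n m) : ℕ := if x.isTop then m else n

def rank : SatPlace n m → ℕ
  | topMid c => 2 * c
  | topLit i _ => 2 * i + 1
  | botMid c => 2 * c
  | botLit i _ => 2 * i + 1

theorem rank_le (x : SatPlace n m) : x.rank ≤ 2 * x.trackLength := by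
  cases x <;> simp only [rank, trackLength, isTop, ↓reduceIte, Bool.false_eq_true] <;> omega

theorem eq_topLit_of_rank {x : SatPlace n m} {k : Fin m} (hx : x.isTop)
    (h : x.rank = 2 * k + 1) : ∃ b, x = topLit k b := by
  cases x with
  | topMid c => simp only [rank] at h; omega
  | topLit i b => exact ⟨b, by rw [Fin.ext (by simp only [rank] at h; omega : (i : ℕ) = k)]⟩
  | botMid _ | botLit _ _ => cases hx

theorem eq_botLit_of_rank {x : SatPlace n m} {i : Fin n} (hx : x.isTop = false)
    (h : x.rank = 2 * i + 1) : ∃ j, x = botLit i j := by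
  cases x with
  | botMid c => simp only [rank] at h; omega
  | botLit i' j => exact ⟨j, by rw [Fin.ext (by simp only [rank] at h; omega : (i' : ℕ) = i)]⟩
  | topMid _ | topLit _ _ => cases hx

instance : Finite (SatPlace n m) :=
  Finite.of_injective
    (fun x => match x with
      | topMid c =>
        (Sum.inl (Sum.inl c) : (Fin (m + 1) ⊕ Fin m × Bool) ⊕ (Fin (n + 1) ⊕ Fin n × Fin 3))
      | topLit i b => Sum.inl (Sum.inr (i, b))
      | botMid c => Sum.inr (Sum.inl c)
      | botLit i j => Sum.inr (Sum.inr (i, j)))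
    (by intro x y h; cases x <;> cases y <;> simp_all)

end SatPlace

namespace SatTrans

def src : SatTrans n m → SatPlace n m
  | topIn i _ => .topMid i.castSucc
  | topOut i b => .topLit i b
  | botIn i _ => .botMid i.castSucc
  | botOut i j => .botLit i j

def tgt : SatTrans n m → SatPlace n m
  | topIn i b => .topLit i b
  | topOut i _ => .topMid i.succ
  | botIn i j => .botLit i j
  | botOut i _ => .botMid i.succ

theorem isTop_tgt (t : SatTrans n m) : t.tgt.isTop = t.src.isTop := by
  cases t <;> rfl

theorem rank_tgt (t : SatTrans n m) : t.tgt.rank = t.src.rank + 1 := by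
  cases t <;> simp [tgt, src, SatPlace.rank] <;> omega

instance : Finite (SatTrans n m) :=
  Finite.of_injective (fun t => (t.src, t.tgt))
    (by intro s t h; cases s <;> cases t <;> simp_all [src, tgt])

end SatTrans

theorem satNet_pre (t : SatTrans n m) : (satNet n m).pre t = {t.src} := by
  cases t <;> rfl

theorem satNet_post (t : SatTrans n m) : (satNet n m).post t = {t.tgt} := by
  cases t <;> rfl

theorem SatPlace.exists_src_eq_of_rank_lt {x : SatPlace n m} (h : x.rank < 2 * x.trackLength) :
    ∃ t : SatTrans n m, t.src = x := by
  cases x with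
  | topMid c =>
    have hc : (c : ℕ) < m := by simp only [rank, trackLength, isTop, ↓reduceIte] at h; omega
    exact ⟨.topIn (c.castLT hc) true, congrArg _ (Fin.castSucc_castLT c hc)⟩
  | topLit i b => exact ⟨.topOut i b, rfl⟩
  | botMid c =>
    have hc : (c : ℕ) < n := by
      simp only [rank, trackLength, isTop, ↓reduceIte, Bool.false_eq_true] at h; omega
    exact ⟨.botIn (c.castLT hc) 0, congrArg _ (Fin.castSucc_castLT c hc)⟩
  | botLit i j => exact ⟨.botOut i j, rfl⟩

theorem satNet_not_lt_self (x : SatPlace n m ⊕ SatTrans n m) : ¬ (satNet n m).lt x x := by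
  refine PreNet.not_lt_self_of_flow_lt (Sum.elim (2 * ·.rank) (2 * ·.src.rank + 1)) ?_ x
  rintro (p | t) (p' | t') h <;> simp only [PreNet.flow, satNet_pre, satNet_post,
    Set.mem_singleton_iff] at h
  · simp [h]
  · simp [h, t.rank_tgt]; omega

def SatPlace.Consistent (v : Fin m → Bool) (c : Fin n → Fin 3) : SatPlace n m → Prop
  | topLit i b => b = v i
  | botLit i j => j = c i
  | _ => True

namespace SatTrans

variable {v : Fin m → Bool} {c : Fin n → Fin 3}

theorem eq_of_src_eq {s t : SatTrans n m} (hs : s.tgt.Consistent v c)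
    (ht : t.tgt.Consistent v c) (h : s.src = t.src) : s = t := by
  cases s <;> cases t <;> simp_all [src, tgt, SatPlace.Consistent]

theorem eq_of_tgt_eq {s t : SatTrans n m} (hs : s.src.Consistent v c)
    (ht : t.src.Consistent v c) (h : s.tgt = t.tgt) : s = t := by
  cases s <;> cases t <;> simp_all [src, tgt, SatPlace.Consistent]

theorem exists_consistent_of_src (t₀ : SatTrans n m) :
    ∃ t : SatTrans n m, t.src = t₀.src ∧ t.tgt.Consistent v c := by
  cases t₀ with
  | topIn i _ => exact ⟨.topIn i (v i), rfl, rfl⟩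
  | topOut i b => exact ⟨.topOut i b, rfl, trivial⟩
  | botIn i _ => exact ⟨.botIn i (c i), rfl, rfl⟩
  | botOut i j => exact ⟨.botOut i j, rfl, trivial⟩

theorem tgt_notMem_init (t : SatTrans n m) : t.tgt ∉ (satNet n m).init := by
  cases t <;> simp [tgt, satNet, Fin.succ_ne_zero]

end SatTrans

theorem SatPlace.exists_tgt_eq {v : Fin m → Bool} {c : Fin n → Fin 3} {x : SatPlace n m}
    (hx : x ∉ (satNet n m).init) :
    ∃ t : SatTrans n m, t.tgt = x ∧ t.src.Consistent v c := by
  cases x with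
  | topMid c' =>
    cases c' using Fin.cases with
    | zero => simp [satNet] at hx
    | succ i => exact ⟨.topOut i (v i), rfl, rfl⟩
  | topLit i b => exact ⟨.topIn i b, rfl, trivial⟩
  | botMid c' =>
    cases c' using Fin.cases with
    | zero => simp [satNet] at hx
    | succ i => exact ⟨.botOut i (c i), rfl, rfl⟩
  | botLit i j => exact ⟨.botIn i j, rfl, trivial⟩

theorem notMem_satGame_bad {F : Fin n → Fin 3 → Bool × Fin m} {v : Fin m → Bool}
    {c : Fin n → Fin 3} (hc : ∀ i, (F i (c i)).1 = v (F i (c i)).2) {M : Set (SatPlace n m)}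
    (hM : ∀ x ∈ M, x.Consistent v c) : M ∉ (satGame n m F).bad := by
  rintro ⟨i, j, k, b, hF, rfl⟩
  have hb : b = v k := hM (.topLit k b) (by simp)
  have hj : j = c i := hM (.botLit i j) (by simp)
  have := hc i
  simp [← hj, hF, hb] at this

abbrev satStrategy (v : Fin m → Bool) (c : Fin n → Fin 3) :=
  (satNet n m).induced {x | x.Consistent v c}

section Strategy

variable {v : Fin m → Bool} {c : Fin n → Fin 3}

theorem satStrategy_trans_iff {t : SatTrans n m} :
    ((satNet n m).pre t ⊆ {x | x.Consistent v c} ∧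
      (satNet n m).post t ⊆ {x | x.Consistent v c}) ↔
      t.src.Consistent v c ∧ t.tgt.Consistent v c := by
  simp [satNet_pre, satNet_post]

theorem satStrategy_mem_pre_iff {p t} : p ∈ (satStrategy v c).pre t ↔ p.1 = t.1.src := by
  change p.1 ∈ (satNet n m).pre t.1 ↔ _
  rw [satNet_pre, Set.mem_singleton_iff]

theorem satStrategy_mem_post_iff {p t} : p ∈ (satStrategy v c).post t ↔ p.1 = t.1.tgt := by
  change p.1 ∈ (satNet n m).post t.1 ↔ _
  rw [satNet_post, Set.mem_singleton_iff]

theorem satStrategy_eq_of_pre_inter {t₁ t₂}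
    (h : ((satStrategy v c).pre t₁ ∩ (satStrategy v c).pre t₂).Nonempty) : t₁ = t₂ := by
  obtain ⟨p, h₁, h₂⟩ := h
  rw [satStrategy_mem_pre_iff] at h₁ h₂
  exact Subtype.ext <| SatTrans.eq_of_src_eq (satStrategy_trans_iff.1 t₁.2).2
    (satStrategy_trans_iff.1 t₂.2).2 (h₁ ▸ h₂)

theorem satStrategy_eq_of_post_inter {t₁ t₂}
    (h : ((satStrategy v c).post t₁ ∩ (satStrategy v c).post t₂).Nonempty) : t₁ = t₂ := by
  obtain ⟨p, h₁, h₂⟩ := h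
  rw [satStrategy_mem_post_iff] at h₁ h₂
  exact Subtype.ext <| SatTrans.eq_of_tgt_eq (satStrategy_trans_iff.1 t₁.2).1
    (satStrategy_trans_iff.1 t₂.2).1 (h₁ ▸ h₂)

theorem satStrategy_init_eq :
    (satStrategy v c).init = {p | ∀ t, p ∉ (satStrategy v c).post t} := by
  ext p
  simp only [Set.mem_ofPred_eq, satStrategy_mem_post_iff]
  constructor
  · rintro hp t hpt
    exact t.1.tgt_notMem_init (hpt ▸ hp)
  · intro hp
    by_contra hinit
    obtain ⟨t, htgt, ht⟩ := SatPlace.exists_tgt_eq hinit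
    exact hp ⟨t, satStrategy_trans_iff.2 ⟨ht, htgt ▸ p.2⟩⟩ htgt.symm

theorem isOccurrenceNet_satStrategy : IsOccurrenceNet (satStrategy v c) where
  toIsPetriNet :=
    ⟨fun t => ⟨⟨t.1.src, (satStrategy_trans_iff.1 t.2).1⟩, satStrategy_mem_pre_iff.2 rfl⟩,
      fun _ => Set.toFinite _, fun _ => Set.toFinite _⟩
  acyclic := PreNet.induced_not_lt_self satNet_not_lt_self
  finitely_preceded _ := Set.toFinite _
  place_pre_subsingleton p _ h₁ _ h₂ := satStrategy_eq_of_post_inter ⟨p, h₁, h₂⟩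
  no_self_conflict _ := PreNet.not_conflict_of_pre_inter fun _ _ => satStrategy_eq_of_pre_inter
  init_eq := satStrategy_init_eq

theorem isWinningStrategy_satStrategy {F : Fin n → Fin 3 → Bool × Fin m}
    (hc : ∀ i, (F i (c i)).1 = v (F i (c i)).2) :
    IsWinningStrategy (satGame n m F) (satStrategy v c) Subtype.val Subtype.val where
  isBP :=
    { occ := isOccurrenceNet_satStrategy
      hom := PreNet.isNetHom_induced fun x hx => by rcases hx with rfl | rfl <;> trivial
      unique := fun _ _ _ h => Subtype.ext h }
  justified_refusal C _ t₀ hC hno := by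
    obtain ⟨p, hp, h⟩ := PreNet.induced_justified_refusal (N := satNet n m)
      (fun t => by simp [satNet_pre]) C t₀ hC hno
    exact ⟨p, hp, Set.mem_univ _, h⟩
  safety M _ := notMem_satGame_bad hc fun _ ⟨p, _, hp⟩ => hp ▸ p.2
  determinism p _ _ _ _ _ h₁ _ h₂ := satStrategy_eq_of_pre_inter ⟨p, h₁.1, h₂.1⟩
  deadlock_avoiding M _ := by
    rintro ⟨t₀, ht₀⟩
    obtain ⟨p, hpM, hp⟩ := ht₀ (show t₀.src ∈ (satNet n m).pre t₀ by simp [satNet_pre])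
    obtain ⟨t, hsrc, htgt⟩ := t₀.exists_consistent_of_src (v := v) (c := c)
    refine ⟨⟨t, satStrategy_trans_iff.2 ⟨hsrc ▸ hp ▸ p.2, htgt⟩⟩, fun q hq => ?_⟩
    rw [satStrategy_mem_pre_iff] at hq
    rwa [Subtype.ext (hq.trans (hsrc.trans hp.symm))]

end Strategy

section Extraction

variable {P T : Type} {N : PreNet P T} {fp : P → SatPlace n m} {ft : T → SatTrans n m}

theorem exists_pre_post_eq (hN : IsNetHom N (satNet n m) fp ft) (t : T) :
    ∃ p q, N.pre t = {p} ∧ N.post t = {q} ∧ fp p = (ft t).src ∧ fp q = (ft t).tgt := by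
  obtain ⟨p, hp, hfp⟩ := (satNet_pre (ft t) ▸ hN.pre_bij t).exists_eq_singleton
  obtain ⟨q, hq, hfq⟩ := (satNet_post (ft t) ▸ hN.post_bij t).exists_eq_singleton
  exact ⟨p, q, hp, hq, hfp, hfq⟩

theorem exists_src_tgt_of_moves (hN : IsNetHom N (satNet n m) fp ft) {p q : P}
    (h : N.Moves p q) : ∃ t : SatTrans n m, t.src = fp p ∧ t.tgt = fp q := by
  obtain ⟨t, hp, hq⟩ := h
  obtain ⟨p', q', hp', hq', hfp, hfq⟩ := exists_pre_post_eq hN t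
  rw [hp, Set.singleton_eq_singleton_iff] at hp'
  rw [hq, Set.singleton_eq_singleton_iff] at hq'
  exact ⟨ft t, hp' ▸ hfp.symm, hq' ▸ hfq.symm⟩

theorem isTop_eq_of_moves (hN : IsNetHom N (satNet n m) fp ft) {p q : P} (h : N.Moves p q) :
    (fp q).isTop = (fp p).isTop := by
  obtain ⟨t, hp, hq⟩ := exists_src_tgt_of_moves hN h
  rw [← hp, ← hq, t.isTop_tgt]

theorem rank_eq_of_moves (hN : IsNetHom N (satNet n m) fp ft) {p q : P} (h : N.Moves p q) :
    (fp q).rank = (fp p).rank + 1 := by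
  obtain ⟨t, hp, hq⟩ := exists_src_tgt_of_moves hN h
  rw [← hp, ← hq, t.rank_tgt]

theorem isTop_eq_of_reflTransGen (hN : IsNetHom N (satNet n m) fp ft) {p q : P}
    (h : Relation.ReflTransGen N.Moves p q) : (fp q).isTop = (fp p).isTop := by
  induction h with
  | refl => rfl
  | tail _ hab ih => rw [isTop_eq_of_moves hN hab, ih]

theorem reachable_of_reflTransGen_moves (hN : IsNetHom N (satNet n m) fp ft) {p p' q : P}
    (hR : N.reachable {p, q}) (h : Relation.ReflTransGen N.Moves p p')
    (hside : (fp p).isTop ≠ (fp q).isTop) : N.reachable {p', q} :=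
  hR.reflTransGen_moves h fun _ hx hxq => hside (isTop_eq_of_reflTransGen hN hx ▸ hxq ▸ rfl)

theorem exists_moves_of_reachable (hN : IsNetHom N (satNet n m) fp ft)
    (hdead : (satNet n m).DeadlockAvoiding N fp) {p q : P} (hR : N.reachable {p, q})
    (hside : (fp p).isTop ≠ (fp q).isTop) (hp : ∃ t₀ : SatTrans n m, t₀.src = fp p) :
    ∃ p', N.Moves p p' := by
  induction hk : 2 * (fp q).trackLength - (fp q).rank using Nat.strong_induction_on
    generalizing q with
  | _ k ih =>
  by_cases hq : ∃ q', N.Moves q q'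
  · obtain ⟨q', hqq'⟩ := hq
    have htop := isTop_eq_of_moves hN hqq'
    have hrank := rank_eq_of_moves hN hqq'
    have hbound := (fp q').rank_le
    have hR' : N.reachable {p, q'} := by
      rw [Set.pair_comm] at hR ⊢
      exact hR.moves hqq' fun h => hside (h ▸ rfl)
    refine ih _ ?_ hR' (htop.symm ▸ hside) rfl
    simp only [SatPlace.trackLength, htop] at hbound hk ⊢
    omega
  · obtain ⟨t₀, ht₀⟩ := hp
    obtain ⟨t, ht⟩ :=
      hdead _ hR ⟨t₀, by simp [PreNet.enabled, satNet_pre, ht₀, Set.image_pair]⟩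
    obtain ⟨x, y, hx, hy, -⟩ := exists_pre_post_eq hN t
    rcases ht (hx ▸ rfl : x ∈ N.pre t) with rfl | rfl
    · exact ⟨y, t, hx, hy⟩
    · exact absurd ⟨y, t, hx, hy⟩ hq

theorem exists_reflTransGen_moves_rank (hN : IsNetHom N (satNet n m) fp ft)
    (hdead : (satNet n m).DeadlockAvoiding N fp) {p q : P} (hR : N.reachable {p, q})
    (hside : (fp p).isTop ≠ (fp q).isTop) :
    ∀ d, (fp p).rank + d ≤ 2 * (fp p).trackLength →
      ∃ p', Relation.ReflTransGen N.Moves p p' ∧ (fp p').rank = (fp p).rank + d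
  | 0, _ => ⟨p, .refl, rfl⟩
  | d + 1, hd => by
    obtain ⟨p', hpp', hrank⟩ := exists_reflTransGen_moves_rank hN hdead hR hside d (by omega)
    have htop := isTop_eq_of_reflTransGen hN hpp'
    have hR' := reachable_of_reflTransGen_moves hN hR hpp' hside
    have hlt : (fp p').rank < 2 * (fp p').trackLength := by
      simp only [SatPlace.trackLength, htop] at hd ⊢
      omega
    obtain ⟨p'', hp'p''⟩ := exists_moves_of_reachable hN hdead hR' (htop ▸ hside)
      (SatPlace.exists_src_eq_of_rank_lt hlt)
    exact ⟨p'', hpp'.tail hp'p'', by rw [rank_eq_of_moves hN hp'p'', hrank]; rfl⟩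

theorem exists_reflTransGen_moves_topLit (hN : IsNetHom N (satNet n m) fp ft)
    (hdead : (satNet n m).DeadlockAvoiding N fp) {p q : P} (hR : N.reachable {p, q})
    (hp : fp p = .topMid 0) (hq : (fp q).isTop = false) (k : Fin m) :
    ∃ b p', Relation.ReflTransGen N.Moves p p' ∧ fp p' = .topLit k b := by
  obtain ⟨p', hpp', hrank⟩ := exists_reflTransGen_moves_rank hN hdead hR
    (by rw [hp, hq]; simp [SatPlace.isTop]) (2 * k + 1)
    (by simp [hp, SatPlace.rank, SatPlace.trackLength, SatPlace.isTop])
  obtain ⟨b, hb⟩ := SatPlace.eq_topLit_of_rank (k := k)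
    (by rw [isTop_eq_of_reflTransGen hN hpp', hp]; rfl) (by simpa [hp, SatPlace.rank] using hrank)
  exact ⟨b, p', hpp', hb⟩

theorem exists_reflTransGen_moves_botLit (hN : IsNetHom N (satNet n m) fp ft)
    (hdead : (satNet n m).DeadlockAvoiding N fp) {p q : P} (hR : N.reachable {p, q})
    (hp : fp p = .botMid 0) (hq : (fp q).isTop = true) (i : Fin n) :
    ∃ j p', Relation.ReflTransGen N.Moves p p' ∧ fp p' = .botLit i j := by
  obtain ⟨p', hpp', hrank⟩ := exists_reflTransGen_moves_rank hN hdead hR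
    (by rw [hp, hq]; simp [SatPlace.isTop]) (2 * i + 1)
    (by simp [hp, SatPlace.rank, SatPlace.trackLength, SatPlace.isTop])
  obtain ⟨j, hj⟩ := SatPlace.eq_botLit_of_rank (i := i)
    (by rw [isTop_eq_of_reflTransGen hN hpp', hp]; rfl) (by simpa [hp, SatPlace.rank] using hrank)
  exact ⟨j, p', hpp', hj⟩

theorem satisfiable_of_hasWinningStrategy {F : Fin n → Fin 3 → Bool × Fin m}
    (h : HasWinningStrategy (satGame n m F)) :
    ∃ v : Fin m → Bool, ∀ i : Fin n, ∃ j : Fin 3, (F i j).1 = v (F i j).2 := by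
  obtain ⟨P, T, N, fp, ft, hw⟩ := h
  have hN : IsNetHom N (satNet n m) fp ft := hw.isBP.hom
  have hdead : (satNet n m).DeadlockAvoiding N fp := hw.deadlock_avoiding
  obtain ⟨p₀, q₀, hinit, hp₀, hq₀⟩ := hN.init_bij.exists_eq_pair
  have hR : N.reachable {p₀, q₀} := hinit ▸ ⟨[], .nil _⟩
  have hR' : N.reachable {q₀, p₀} := Set.pair_comm p₀ q₀ ▸ hR
  choose v p hp hfp using exists_reflTransGen_moves_topLit hN hdead hR hp₀ (by rw [hq₀]; rfl)
  refine ⟨v, fun i => ?_⟩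
  obtain ⟨j, q, hq, hfq⟩ :=
    exists_reflTransGen_moves_botLit hN hdead hR' hq₀ (by rw [hp₀]; rfl) i
  refine ⟨j, ?_⟩
  have hRq : N.reachable {p₀, q} := Set.pair_comm q p₀ ▸
    reachable_of_reflTransGen_moves hN hR' hq (by simp [hp₀, hq₀, SatPlace.isTop])
  have hRpq : N.reachable {p (F i j).2, q} :=
    reachable_of_reflTransGen_moves hN hRq (hp _) (by simp [hfq, hp₀, SatPlace.isTop])
  by_contra hne
  refine hw.safety _ hRpq ⟨i, j, (F i j).2, v (F i j).2, ?_, by rw [Set.image_pair, hfp, hfq]⟩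
  exact Prod.ext (Bool.eq_not_iff.2 hne) rfl

end Extraction

end Reduction

/-- (Correctness of the 3-SAT reduction.) The two-player Petri
game `G_F` has a winning strategy if and only if the 3-CNF formula `F` is
satisfiable (a literal `(b, k)` is true under an assignment `v` iff `v k = b`). -/
theorem satReduction (n m : ℕ) (F : Fin n → Fin 3 → Bool × Fin m) :
    HasWinningStrategy (satGame n m F) ↔
    ∃ v : Fin m → Bool, ∀ i : Fin n, ∃ j : Fin 3, (F i j).1 = v (F i j).2 := by
  refine ⟨satisfiable_of_hasWinningStrategy, fun ⟨v, hv⟩ => ?_⟩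
  choose c hc using hv
  exact ⟨_, _, satStrategy v c, Subtype.val, Subtype.val, isWinningStrategy_satStrategy hc⟩

end PG
end

section
/- (Pigeonhole for partial repetition cuts.) Let B be a branching process of a finite safe Petri net N₀ with T transitions, let R be a fixed set of places of B, and let t₁ < t₂ < … < t_m be causally ordered transitions of B such that lkc(t_i) \ post(t_i) = R for every i. If m > T, then there exist indices i < j with prc(t_i, t_j); in particular prc_loop(t_i, t_j) holds for this pair. -/
/-!
Since `post(t) ⊆ lkc(t)` and `π` maps `post(t)` onto `post(π(t))`, we have
`lkm(t) = π(R) ∪ post(π(t))` whenever `lkc(t) \ post(t) = R`. Hence two transitions of the chain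
with the same label satisfy `prc`, and more than `|T₀|` transitions must repeat a label.
-/

namespace PG

lemma exists_lt_map_eq_of_natCard_lt {α β : Type*} [LinearOrder α] [Finite β] (f : α → β)
    (h : Nat.card β < Nat.card α) : ∃ i j, i < j ∧ f i = f j := by
  obtain ⟨i, j, hfij, hij⟩ : ∃ i j, f i = f j ∧ i ≠ j :=
    Function.not_injective_iff.mp fun hf => (Nat.card_le_card_of_injective f hf).not_gt h
  rcases hij.lt_or_gt with hlt | hgt
  · exact ⟨i, j, hlt, hfij⟩
  · exact ⟨j, i, hgt, hfij.symm⟩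

variable {P₀ T₀ P T : Type}

lemma post_subset_lkc {N : PreNet P T} (hN : IsOccurrenceNet N) (t : T) :
    N.post t ⊆ lkc N t := by
  intro p hp
  refine ⟨fun hlt => hN.acyclic (Sum.inr t) (Relation.TransGen.head (b := Sum.inl p) hp hlt),
    fun t' ht' => ?_⟩
  obtain rfl := hN.place_pre_subsingleton p ht' hp
  exact Relation.ReflTransGen.refl

lemma lkm_eq_image_diff_union_post {N₀ : PreNet P₀ T₀} {N : PreNet P T} {fp : P → P₀}
    {ft : T → T₀} (hB : IsBranchingProcess N₀ N fp ft) (t : T) :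
    lkm N fp t = fp '' (lkc N t \ N.post t) ∪ N₀.post (ft t) := by
  rw [← (hB.hom.post_bij t).image_eq, ← Set.image_union, Set.sdiff_union_self,
    Set.union_eq_self_of_subset_right (post_subset_lkc hB.occ t), lkm]

lemma prc_of_diff_post_eq_of_label_eq {N₀ : PreNet P₀ T₀} {N : PreNet P T} {fp : P → P₀}
    {ft : T → T₀} (hB : IsBranchingProcess N₀ N fp ft) {t₁ t₂ : T}
    (hdiff : lkc N t₁ \ N.post t₁ = lkc N t₂ \ N.post t₂) (hlabel : ft t₁ = ft t₂) :
    prc N fp t₁ t₂ :=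
  ⟨by rw [lkm_eq_image_diff_union_post hB, lkm_eq_image_diff_union_post hB, hdiff, hlabel],
    hdiff⟩

theorem prc_pigeonhole_general {P₀ T₀ P T : Type} [Finite T₀]
    (N₀ : PreNet P₀ T₀)
    (N : PreNet P T) (fp : P → P₀) (ft : T → T₀)
    (hB : IsBranchingProcess N₀ N fp ft)
    (R : Set P) (m : ℕ) (t : Fin m → T)
    (hchain : ∀ i j : Fin m, i < j → N.lt (Sum.inr (t i)) (Sum.inr (t j)))
    (hR : ∀ i, lkc N (t i) \ N.post (t i) = R)
    (hm : Nat.card T₀ < m) :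
    ∃ i j : Fin m, i < j ∧ prc N fp (t i) (t j) ∧ prcLoop N fp (t i) (t j) := by
  obtain ⟨i, j, hij, hlabel⟩ :=
    exists_lt_map_eq_of_natCard_lt (ft ∘ t) (by rwa [Nat.card_fin])
  have hprc : prc N fp (t i) (t j) :=
    prc_of_diff_post_eq_of_label_eq hB ((hR i).trans (hR j).symm) hlabel
  exact ⟨i, j, hij, hprc, hprc, hchain i j hij⟩

/-- (Pigeonhole for partial repetition cuts.) Let `B` be a
branching process of a finite safe Petri net `N₀` with `|T₀|` transitions, `R` a
fixed set of places of `B`, and `t₁ < t₂ < … < t_m` causally ordered transitions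
of `B` with `lkc(tᵢ) \ post(tᵢ) = R` for every `i`. If `m > |T₀|`, then there
exist `i < j` with `prc(tᵢ, tⱼ)`; in particular `prc_loop(tᵢ, tⱼ)` holds. -/
theorem prc_pigeonhole {P₀ T₀ P T : Type} [Finite P₀] [Finite T₀]
    (N₀ : PreNet P₀ T₀) (hN₀ : IsPetriNet N₀) (hsafe : N₀.Safe)
    (N : PreNet P T) (fp : P → P₀) (ft : T → T₀)
    (hB : IsBranchingProcess N₀ N fp ft)
    (R : Set P) (m : ℕ) (t : Fin m → T)
    (hchain : ∀ i j : Fin m, i < j → N.lt (Sum.inr (t i)) (Sum.inr (t j)))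
    (hR : ∀ i, lkc N (t i) \ N.post (t i) = R)
    (hm : Nat.card T₀ < m) :
    ∃ i j : Fin m, i < j ∧ prc N fp (t i) (t j) ∧ prcLoop N fp (t i) (t j) :=
  prc_pigeonhole_general N₀ N fp ft hB R m t hchain hR hm

end PG
end
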